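/- Let J₀ be a two-sided p-periodic Jacobi matrix with discriminant Δ_{J₀}, and let J = J(a,b) and J' = J(a',b') be two-sided Jacobi operators. Let k ≤ ℓ ≤ k + p be integers and set α := ⌊(p − (ℓ − k))/2⌋. If b_j = b'_j for all j with k − α ≤ j ≤ ℓ + α and a_j = a'_j for all j with k − α ≤ j ≤ ℓ + α − 1, then ⟨δ_k, Δ_{J₀}(J) δ_ℓ⟩ = ⟨δ_k, Δ_{J₀}(J') δ_ℓ⟩. In other words, the (k,ℓ) matrix entry of Δ_{J₀}(J) depends only on {b_j}_{j=k−α}^{ℓ+α} and {a_j}_{j=k−α}^{ℓ+α−1}. -/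

import Mathlib

open scoped ComplexConjugate

noncomputable section

/-- The two-sided Hilbert space `ℓ²(ℤ)`. -/
abbrev HZ : Type := lp (fun _ : ℤ => ℂ) 2

/-- The standard orthonormal basis vectors. -/
def deltaZ (k : ℤ) : HZ := lp.single 2 k 1

/-- Matrix entries `A_{kℓ} = ⟨δ_k, A δ_ℓ⟩`. -/
def entryZ (A : HZ →L[ℂ] HZ) (k l : ℤ) : ℂ := inner ℂ (deltaZ k) (A (deltaZ l))

/-- The transfer matrix `Λ_n(x) = (1/a_n)·[[x − b_n, −1], [a_n², 0]]`. -/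
def lamMat (a b : ℤ → ℝ) (n : ℤ) : Matrix (Fin 2) (Fin 2) (Polynomial ℝ) :=
  Polynomial.C (a n)⁻¹ • !![Polynomial.X - Polynomial.C (b n), -1;
    Polynomial.C ((a n) ^ 2), 0]

/-- The ordered product `Λ_n ⋯ Λ_2 Λ_1`. -/
def tMat (a b : ℤ → ℝ) : ℕ → Matrix (Fin 2) (Fin 2) (Polynomial ℝ)
  | 0 => 1
  | n + 1 => lamMat a b ((n : ℤ) + 1) * tMat a b n

/-- The discriminant `Δ_{(a,b)}(x) = Tr(Λ_p(x) ⋯ Λ_1(x))`. -/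
def disc (a b : ℤ → ℝ) (p : ℕ) : Polynomial ℝ := Matrix.trace (tMat a b p)

/-- Evaluation of a real polynomial at a bounded operator. -/
def polyOp (q : Polynomial ℝ) (A : HZ →L[ℂ] HZ) : HZ →L[ℂ] HZ :=
  Polynomial.aeval A (q.map (algebraMap ℝ ℂ))

/-! Every power `J^m` moves `δ_ℓ` at most `m` sites, and the entry `(J^m)_{kℓ}` is a sum over
paths of length `m` from `ℓ` to `k`, which only visit sites `j` with `|2j − (k + ℓ)| ≤ m`.
Since `Δ_{J₀}` has degree at most `p`, the entry `Δ_{J₀}(J)_{kℓ}` only involves the Jacobi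
parameters in the window `|2j − (k + ℓ)| ≤ p`, which is `k − α ≤ j ≤ ℓ + α`. -/

open Polynomial

lemma deltaZ_apply (k n : ℤ) : deltaZ k n = if n = k then 1 else 0 := by
  simp [deltaZ, lp.single_apply, Pi.single_apply]

lemma entryZ_eq_apply (A : HZ →L[ℂ] HZ) (k l : ℤ) : entryZ A k l = A (deltaZ l) k := by
  classical
  simpa [entryZ, deltaZ] using lp.inner_single_left (𝕜 := ℂ) k (1 : ℂ) (A (deltaZ l))

def IsJacobiOp (a b : ℤ → ℝ) (J : HZ →L[ℂ] HZ) : Prop :=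
  ∀ (u : HZ) (n : ℤ),
    J u n = (a (n - 1) : ℂ) * u (n - 1) + (b n : ℂ) * u n + (a n : ℂ) * u (n + 1)

namespace IsJacobiOp

variable {a b a' b' : ℤ → ℝ} {J J' : HZ →L[ℂ] HZ}

lemma pow_apply_deltaZ_eq_zero (hJ : IsJacobiOp a b J) :
    ∀ (m : ℕ) {k l : ℤ}, k + m < l ∨ l + m < k → (J ^ m) (deltaZ l) k = 0
  | 0, k, l, h => by
    rw [pow_zero, one_apply_eq_self, deltaZ_apply, if_neg (by omega)]
  | m + 1, k, l, h => by
    push_cast at h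
    rw [pow_succ', mul_apply_eq_comp, hJ,
      pow_apply_deltaZ_eq_zero hJ m (by omega), pow_apply_deltaZ_eq_zero hJ m (by omega),
      pow_apply_deltaZ_eq_zero hJ m (by omega)]
    ring

lemma pow_apply_deltaZ_congr (hJ : IsJacobiOp a b J) (hJ' : IsJacobiOp a' b' J') :
    ∀ (m : ℕ) {k l : ℤ},
      (∀ j : ℤ, k + l - m ≤ 2 * j → 2 * j ≤ k + l + m → b j = b' j) →
      (∀ j : ℤ, k + l - m ≤ 2 * j → 2 * j ≤ k + l + m - 2 → a j = a' j) →
      (J ^ m) (deltaZ l) k = (J' ^ m) (deltaZ l) k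
  | 0, _, _, _, _ => rfl
  | m + 1, k, l, hb, ha => by
    push_cast at hb ha
    have ih : ∀ k', k - 1 ≤ k' → k' ≤ k + 1 → (J ^ m) (deltaZ l) k' = (J' ^ m) (deltaZ l) k' :=
      fun k' h₁ h₂ => pow_apply_deltaZ_congr hJ hJ' m
        (fun j _ _ => hb j (by omega) (by omega)) (fun j _ _ => ha j (by omega) (by omega))
    -- A coefficient only matters where `J^m δ_ℓ` can be nonzero, and there it lies in the window.
    have term : ∀ (k' : ℤ) (c c' : ℝ), k - 1 ≤ k' → k' ≤ k + 1 →
        (¬(k' + m < l ∨ l + m < k') → c = c') →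
        (c : ℂ) * (J ^ m) (deltaZ l) k' = (c' : ℂ) * (J' ^ m) (deltaZ l) k' := by
      intro k' c c' h₁ h₂ hc
      by_cases hs : k' + m < l ∨ l + m < k'
      · rw [hJ.pow_apply_deltaZ_eq_zero m hs, hJ'.pow_apply_deltaZ_eq_zero m hs,
          mul_zero, mul_zero]
      · rw [hc hs, ih k' h₁ h₂]
    rw [pow_succ', mul_apply_eq_comp, hJ, pow_succ', mul_apply_eq_comp,
      hJ', term (k - 1) _ _ (by omega) (by omega) (fun _ => ha (k - 1) (by omega) (by omega)),
      term k _ _ (by omega) (by omega) (fun _ => hb k (by omega) (by omega)),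
      term (k + 1) _ _ (by omega) (by omega) (fun _ => ha k (by omega) (by omega))]

lemma entryZ_polyOp_congr (hJ : IsJacobiOp a b J) (hJ' : IsJacobiOp a' b' J')
    {q : ℝ[X]} {m : ℕ} (hq : q.natDegree ≤ m) {k l : ℤ}
    (hb : ∀ j : ℤ, k + l - m ≤ 2 * j → 2 * j ≤ k + l + m → b j = b' j)
    (ha : ∀ j : ℤ, k + l - m ≤ 2 * j → 2 * j ≤ k + l + m - 2 → a j = a' j) :
    entryZ (polyOp q J) k l = entryZ (polyOp q J') k l := by
  have hdeg : (q.map (algebraMap ℝ ℂ)).natDegree < m + 1 :=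
    Nat.lt_succ_of_le (natDegree_map_le.trans hq)
  simp only [entryZ_eq_apply, polyOp, aeval_eq_sum_range' hdeg, sum_apply,
    smul_apply, lp.coeFn_sum, Finset.sum_apply, lp.coeFn_smul, Pi.smul_apply]
  refine Finset.sum_congr rfl fun i hi => ?_
  have him : (i : ℤ) ≤ m := by have := Finset.mem_range.mp hi; omega
  rw [pow_apply_deltaZ_congr hJ hJ' i (fun j _ _ => hb j (by omega) (by omega))
    (fun j _ _ => ha j (by omega) (by omega))]

end IsJacobiOp

lemma lamMat_natDegree_le (a b : ℤ → ℝ) (n : ℤ) (i j : Fin 2) :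
    (lamMat a b n i j).natDegree ≤ 1 := by
  rw [lamMat, Matrix.smul_apply, smul_eq_mul]
  refine natDegree_mul_le.trans ?_
  fin_cases i <;> fin_cases j <;> simp

lemma tMat_natDegree_le (a b : ℤ → ℝ) : ∀ (n : ℕ) (i j : Fin 2), (tMat a b n i j).natDegree ≤ n
  | 0, i, j => by
    rw [tMat, Matrix.one_apply]
    split_ifs <;> simp
  | n + 1, i, j => by
    rw [tMat, Matrix.mul_apply]
    refine natDegree_sum_le_of_forall_le _ _ fun c _ => natDegree_mul_le.trans ?_
    have := lamMat_natDegree_le a b ((n : ℤ) + 1) i c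
    have := tMat_natDegree_le a b n c j
    omega

lemma disc_natDegree_le (a b : ℤ → ℝ) (p : ℕ) : (disc a b p).natDegree ≤ p :=
  natDegree_sum_le_of_forall_le Finset.univ (Matrix.diag (tMat a b p)) fun i _ =>
    tMat_natDegree_le a b p i i

theorem statement15_general (p : ℕ)
    (a0 b0 : ℤ → ℝ)
    (a b a' b' : ℤ → ℝ)
    (J : HZ →L[ℂ] HZ)
    (hJ : ∀ (u : HZ) (n : ℤ),
      (J u) n = (a (n - 1) : ℂ) * u (n - 1) + (b n : ℂ) * u n + (a n : ℂ) * u (n + 1))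
    (J' : HZ →L[ℂ] HZ)
    (hJ' : ∀ (u : HZ) (n : ℤ),
      (J' u) n = (a' (n - 1) : ℂ) * u (n - 1) + (b' n : ℂ) * u n + (a' n : ℂ) * u (n + 1))
    (k l : ℤ)
    (hbeq : ∀ j : ℤ, k - (p - (l - k)) / 2 ≤ j → j ≤ l + (p - (l - k)) / 2 → b j = b' j)
    (haeq : ∀ j : ℤ, k - (p - (l - k)) / 2 ≤ j → j ≤ l + (p - (l - k)) / 2 - 1 → a j = a' j) :
    entryZ (polyOp (disc a0 b0 p) J) k l = entryZ (polyOp (disc a0 b0 p) J') k l :=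
  IsJacobiOp.entryZ_polyOp_congr hJ hJ' (disc_natDegree_le a0 b0 p)
    (fun j _ _ => hbeq j (by omega) (by omega)) (fun j _ _ => haeq j (by omega) (by omega))

/-- the `(k,ℓ)` matrix entry of `Δ_{J₀}(J)` depends only on
`{b_j}_{j=k−α}^{ℓ+α}` and `{a_j}_{j=k−α}^{ℓ+α−1}`, where `α = ⌊(p−(ℓ−k))/2⌋`. -/
theorem statement15 (p : ℕ) (hp : 1 ≤ p)
    (a0 b0 : ℤ → ℝ) (ha0pos : ∀ n, 0 < a0 n)
    (hpera : Function.Periodic a0 (p : ℤ)) (hperb : Function.Periodic b0 (p : ℤ))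
    (a b a' b' : ℤ → ℝ)
    (hbdd : ∃ C : ℝ, ∀ n : ℤ, |a n| ≤ C ∧ |b n| ≤ C)
    (hbdd' : ∃ C : ℝ, ∀ n : ℤ, |a' n| ≤ C ∧ |b' n| ≤ C)
    (hpos : ∀ n, 0 < a n) (hpos' : ∀ n, 0 < a' n)
    (J : HZ →L[ℂ] HZ)
    (hJ : ∀ (u : HZ) (n : ℤ),
      (J u) n = (a (n - 1) : ℂ) * u (n - 1) + (b n : ℂ) * u n + (a n : ℂ) * u (n + 1))
    (J' : HZ →L[ℂ] HZ)
    (hJ' : ∀ (u : HZ) (n : ℤ),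
      (J' u) n = (a' (n - 1) : ℂ) * u (n - 1) + (b' n : ℂ) * u n + (a' n : ℂ) * u (n + 1))
    (k l : ℤ) (hkl : k ≤ l) (hlk : l ≤ k + p)
    (hbeq : ∀ j : ℤ, k - (p - (l - k)) / 2 ≤ j → j ≤ l + (p - (l - k)) / 2 → b j = b' j)
    (haeq : ∀ j : ℤ, k - (p - (l - k)) / 2 ≤ j → j ≤ l + (p - (l - k)) / 2 - 1 → a j = a' j) :
    entryZ (polyOp (disc a0 b0 p) J) k l = entryZ (polyOp (disc a0 b0 p) J') k l :=
  statement15_general p a0 b0 a b a' b' J hJ J' hJ' k l hbeq haeq
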